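/- arXiv:2208.03741 — 5 statements merged into one kernel-verified Lean document; each statement's English description precedes it below -/
import Mathlib

section
/- Let ρ be a tolerance relation on a lattice L and let A, B be blocks of ρ. Then any two elements of the set {a ∨ b : a ∈ A, b ∈ B} are related by ρ, so this set extends to a block of ρ. -/
variable {L : Type*}

def IsTolerance [Lattice L] (ρ : L → L → Prop) : Prop :=
  (∀ x, ρ x x) ∧ (∀ x y, ρ x y → ρ y x) ∧
  (∀ a b c d, ρ a b → ρ c d → ρ (a ⊔ c) (b ⊔ d)) ∧
  (∀ a b c d, ρ a b → ρ c d → ρ (a ⊓ c) (b ⊓ d))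

def IsCongruence [Lattice L] (ρ : L → L → Prop) : Prop :=
  IsTolerance ρ ∧ ∀ x y z, ρ x y → ρ y z → ρ x z

def IsBlock [Lattice L] (ρ : L → L → Prop) (A : Set L) : Prop :=
  (∀ x ∈ A, ∀ y ∈ A, ρ x y) ∧
  ∀ B : Set L, A ⊆ B → (∀ x ∈ B, ∀ y ∈ B, ρ x y) → B = A

lemma exists_block_superset [Lattice L] (ρ : L → L → Prop)
    (S : Set L) (hS : ∀ x ∈ S, ∀ y ∈ S, ρ x y) :
    ∃ C : Set L, IsBlock ρ C ∧ S ⊆ C := by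
  obtain ⟨C, hSC, ⟨hCcomp, _⟩, hmax⟩ := zorn_subset_nonempty
    {T : Set L | (∀ x ∈ T, ∀ y ∈ T, ρ x y) ∧ S ⊆ T}
    (fun c hc hchain hne => by
      refine ⟨⋃₀ c, ⟨?_, ?_⟩, fun T hT => Set.subset_sUnion_of_mem hT⟩
      · rintro x ⟨T, hT, hxT⟩ y ⟨U, hU, hyU⟩
        rcases hchain.total hT hU with h | h
        · exact (hc hU).1 x (h hxT) y hyU
        · exact (hc hT).1 x hxT y (h hyU)
      · obtain ⟨T, hT⟩ := hne
        exact (hc hT).2.trans (Set.subset_sUnion_of_mem hT))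
    S ⟨hS, le_refl S⟩
  refine ⟨C, ⟨hCcomp, fun D hCD hD => subset_antisymm (hmax ⟨hD, hSC.trans hCD⟩ hCD) hCD⟩, hSC⟩

theorem stmt2 [Lattice L] (ρ : L → L → Prop) (hρ : IsTolerance ρ)
    (A B : Set L) (hA : IsBlock ρ A) (hB : IsBlock ρ B) :
    (∀ u ∈ Set.image2 (· ⊔ ·) A B, ∀ v ∈ Set.image2 (· ⊔ ·) A B, ρ u v) ∧
    ∃ C : Set L, IsBlock ρ C ∧ Set.image2 (· ⊔ ·) A B ⊆ C := by
  have key : ∀ u ∈ Set.image2 (· ⊔ ·) A B, ∀ v ∈ Set.image2 (· ⊔ ·) A B, ρ u v := by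
    rintro u ⟨a, ha, b, hb, rfl⟩ v ⟨a', ha', b', hb', rfl⟩
    exact hρ.2.2.1 a a' b b' (hA.1 a ha a' ha') (hB.1 b hb b' hb')
  exact ⟨key, exists_block_superset ρ _ key⟩
end

section
/- Let ρ be a tolerance on a lattice L. For blocks A, B of ρ, there is a unique block of ρ containing the set {a ∨ b : a ∈ A, b ∈ B}, and dually a unique block containing {a ∧ b : a ∈ A, b ∈ B}. With these operations as join and meet, the set L/ρ of all blocks of ρ forms a lattice. -/
variable {L : Type*}

namespace CzedliAux

variable [Lattice L] {ρ : L → L → Prop}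

/-- The polar of a set: all elements related to every element of `S`. -/
def Polar (ρ : L → L → Prop) (S : Set L) : Set L := {x | ∀ s ∈ S, ρ x s}

lemma mem_of_block (hρ : IsTolerance ρ) {A : Set L} (hA : IsBlock ρ A) {x : L}
    (h : ∀ a ∈ A, ρ x a) : x ∈ A := by
  have hcl : ∀ y ∈ insert x A, ∀ z ∈ insert x A, ρ y z := by
    intro y hy z hz
    rcases Set.mem_insert_iff.1 hy with hy' | hy' <;>
      rcases Set.mem_insert_iff.1 hz with hz' | hz'
    · rw [hy', hz']; exact hρ.1 x
    · rw [hy']; exact h z hz'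
    · rw [hz']; exact hρ.2.1 _ _ (h y hy')
    · exact hA.1 y hy' z hz'
  have := hA.2 (insert x A) (Set.subset_insert x A) hcl
  rw [← this]; exact Set.mem_insert x A

lemma block_nonempty (hρ : IsTolerance ρ) {A : Set L} (hA : IsBlock ρ A) (y : L) :
    A.Nonempty := by
  rcases A.eq_empty_or_nonempty with rfl | h
  · have := hA.2 {y} (Set.empty_subset _) (by
      intro a ha b hb
      rw [Set.mem_singleton_iff] at ha hb
      subst ha; subst hb; exact hρ.1 _)
    exact absurd this (Set.singleton_ne_empty y)
  · exact h

/-- A packaged uniqueness lemma for the join side. -/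
lemma sup_package (hρ : IsTolerance ρ) {S : Set L}
    (hcl : ∀ x ∈ S, ∀ y ∈ S, ρ x y)
    (hlow : ∀ x, (∀ s ∈ S, ρ x s) → ∃ u ∈ S, u ≤ x) :
    IsBlock ρ (Polar ρ S) ∧ S ⊆ Polar ρ S ∧
      ∀ C : Set L, IsBlock ρ C → S ⊆ C → C = Polar ρ S := by
  have hsub : S ⊆ Polar ρ S := fun x hx s hs => hcl x hx s hs
  have hP : ∀ x ∈ Polar ρ S, ∀ y ∈ Polar ρ S, ρ x y := by
    intro x hx y hy
    obtain ⟨u, hu, hux⟩ := hlow x hx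
    obtain ⟨v, hv, hvy⟩ := hlow y hy
    have h1 : ρ x v := hx v hv
    have h2 : ρ u y := hρ.2.1 _ _ (hy u hu)
    have h3 := hρ.2.2.1 _ _ _ _ h1 h2
    rwa [sup_eq_left.2 hux, sup_eq_right.2 hvy] at h3
  have hblk : IsBlock ρ (Polar ρ S) := by
    refine ⟨hP, fun B hPB hB => ?_⟩
    refine Set.Subset.antisymm ?_ hPB
    intro y hy s hs
    exact hB y hy s (hPB (hsub hs))
  refine ⟨hblk, hsub, fun C hC hSC => ?_⟩
  have hCP : C ⊆ Polar ρ S := fun c hc s hs => hC.1 c hc s (hSC hs)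
  exact (hC.2 (Polar ρ S) hCP hP).symm

/-- A packaged uniqueness lemma for the meet side. -/
lemma inf_package (hρ : IsTolerance ρ) {S : Set L}
    (hcl : ∀ x ∈ S, ∀ y ∈ S, ρ x y)
    (hhigh : ∀ x, (∀ s ∈ S, ρ x s) → ∃ u ∈ S, x ≤ u) :
    IsBlock ρ (Polar ρ S) ∧ S ⊆ Polar ρ S ∧
      ∀ C : Set L, IsBlock ρ C → S ⊆ C → C = Polar ρ S := by
  have hsub : S ⊆ Polar ρ S := fun x hx s hs => hcl x hx s hs
  have hP : ∀ x ∈ Polar ρ S, ∀ y ∈ Polar ρ S, ρ x y := by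
    intro x hx y hy
    obtain ⟨u, hu, hux⟩ := hhigh x hx
    obtain ⟨v, hv, hvy⟩ := hhigh y hy
    have h1 : ρ x v := hx v hv
    have h2 : ρ u y := hρ.2.1 _ _ (hy u hu)
    have h3 := hρ.2.2.2 _ _ _ _ h1 h2
    rwa [inf_eq_left.2 hux, inf_eq_right.2 hvy] at h3
  have hblk : IsBlock ρ (Polar ρ S) := by
    refine ⟨hP, fun B hPB hB => ?_⟩
    refine Set.Subset.antisymm ?_ hPB
    intro y hy s hs
    exact hB y hy s (hPB (hsub hs))
  refine ⟨hblk, hsub, fun C hC hSC => ?_⟩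
  have hCP : C ⊆ Polar ρ S := fun c hc s hs => hC.1 c hc s (hSC hs)
  exact (hC.2 (Polar ρ S) hCP hP).symm

lemma meet_mem_block (hρ : IsTolerance ρ) {A : Set L} (hA : IsBlock ρ A) {a x : L}
    (ha : a ∈ A) (h : ∀ a' ∈ A, ∃ s, a' ≤ s ∧ ρ x s) : x ⊓ a ∈ A := by
  apply mem_of_block hρ hA
  intro a' ha'
  obtain ⟨s, hle, hxs⟩ := h a' ha'
  have h3 := hρ.2.2.2 _ _ _ _ hxs (hA.1 a ha a' ha')
  rwa [inf_eq_right.2 hle] at h3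

lemma join_mem_block (hρ : IsTolerance ρ) {A : Set L} (hA : IsBlock ρ A) {a x : L}
    (ha : a ∈ A) (h : ∀ a' ∈ A, ∃ s, s ≤ a' ∧ ρ x s) : x ⊔ a ∈ A := by
  apply mem_of_block hρ hA
  intro a' ha'
  obtain ⟨s, hle, hxs⟩ := h a' ha'
  have h3 := hρ.2.2.1 _ _ _ _ hxs (hA.1 a ha a' ha')
  rwa [sup_eq_right.2 hle] at h3

section Ops

variable (hρ : IsTolerance ρ)
include hρ

lemma jS_clique {A B : Set L} (hA : IsBlock ρ A) (hB : IsBlock ρ B) :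
    ∀ x ∈ Set.image2 (· ⊔ ·) A B, ∀ y ∈ Set.image2 (· ⊔ ·) A B, ρ x y := by
  rintro _ ⟨a, ha, b, hb, rfl⟩ _ ⟨a', ha', b', hb', rfl⟩
  exact hρ.2.2.1 _ _ _ _ (hA.1 a ha a' ha') (hB.1 b hb b' hb')

lemma iS_clique {A B : Set L} (hA : IsBlock ρ A) (hB : IsBlock ρ B) :
    ∀ x ∈ Set.image2 (· ⊓ ·) A B, ∀ y ∈ Set.image2 (· ⊓ ·) A B, ρ x y := by
  rintro _ ⟨a, ha, b, hb, rfl⟩ _ ⟨a', ha', b', hb', rfl⟩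
  exact hρ.2.2.2 _ _ _ _ (hA.1 a ha a' ha') (hB.1 b hb b' hb')

lemma jS_hlow {A B : Set L} (hA : IsBlock ρ A) (hB : IsBlock ρ B) :
    ∀ x, (∀ s ∈ Set.image2 (· ⊔ ·) A B, ρ x s) → ∃ u ∈ Set.image2 (· ⊔ ·) A B, u ≤ x := by
  intro x hx
  obtain ⟨a, ha⟩ := block_nonempty hρ hA x
  obtain ⟨b, hb⟩ := block_nonempty hρ hB x
  have hxa : x ⊓ a ∈ A := meet_mem_block hρ hA ha fun a' ha' =>
    ⟨a' ⊔ b, le_sup_left, hx _ (Set.mem_image2_of_mem ha' hb)⟩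
  have hxb : x ⊓ b ∈ B := meet_mem_block hρ hB hb fun b' hb' =>
    ⟨a ⊔ b', le_sup_right, hx _ (Set.mem_image2_of_mem ha hb')⟩
  exact ⟨_, Set.mem_image2_of_mem hxa hxb, sup_le inf_le_left inf_le_left⟩

lemma iS_hhigh {A B : Set L} (hA : IsBlock ρ A) (hB : IsBlock ρ B) :
    ∀ x, (∀ s ∈ Set.image2 (· ⊓ ·) A B, ρ x s) → ∃ u ∈ Set.image2 (· ⊓ ·) A B, x ≤ u := by
  intro x hx
  obtain ⟨a, ha⟩ := block_nonempty hρ hA x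
  obtain ⟨b, hb⟩ := block_nonempty hρ hB x
  have hxa : x ⊔ a ∈ A := join_mem_block hρ hA ha fun a' ha' =>
    ⟨a' ⊓ b, inf_le_left, hx _ (Set.mem_image2_of_mem ha' hb)⟩
  have hxb : x ⊔ b ∈ B := join_mem_block hρ hB hb fun b' hb' =>
    ⟨a ⊓ b', inf_le_right, hx _ (Set.mem_image2_of_mem ha hb')⟩
  exact ⟨_, Set.mem_image2_of_mem hxa hxb, le_inf le_sup_left le_sup_left⟩

/-- The join of two blocks. -/
def supBlock (A B : {A : Set L // IsBlock ρ A}) : {A : Set L // IsBlock ρ A} :=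
  ⟨Polar ρ (Set.image2 (· ⊔ ·) A.1 B.1),
    (sup_package hρ (jS_clique hρ A.2 B.2) (jS_hlow hρ A.2 B.2)).1⟩

/-- The meet of two blocks. -/
def infBlock (A B : {A : Set L // IsBlock ρ A}) : {A : Set L // IsBlock ρ A} :=
  ⟨Polar ρ (Set.image2 (· ⊓ ·) A.1 B.1),
    (inf_package hρ (iS_clique hρ A.2 B.2) (iS_hhigh hρ A.2 B.2)).1⟩

lemma supBlock_comm (A B : {A : Set L // IsBlock ρ A}) :
    supBlock hρ A B = supBlock hρ B A := by
  apply Subtype.ext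
  show Polar ρ _ = Polar ρ _
  rw [Set.image2_comm fun a b => sup_comm a b]

lemma infBlock_comm (A B : {A : Set L // IsBlock ρ A}) :
    infBlock hρ A B = infBlock hρ B A := by
  apply Subtype.ext
  show Polar ρ _ = Polar ρ _
  rw [Set.image2_comm fun a b => inf_comm a b]

lemma jS3_clique {A B C : Set L} (hA : IsBlock ρ A) (hB : IsBlock ρ B) (hC : IsBlock ρ C) :
    ∀ x ∈ Set.image2 (· ⊔ ·) (Set.image2 (· ⊔ ·) A B) C,
      ∀ y ∈ Set.image2 (· ⊔ ·) (Set.image2 (· ⊔ ·) A B) C, ρ x y := by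
  rintro _ ⟨_, ⟨a, ha, b, hb, rfl⟩, c, hc, rfl⟩ _ ⟨_, ⟨a', ha', b', hb', rfl⟩, c', hc', rfl⟩
  exact hρ.2.2.1 _ _ _ _
    (hρ.2.2.1 _ _ _ _ (hA.1 a ha a' ha') (hB.1 b hb b' hb')) (hC.1 c hc c' hc')

lemma iS3_clique {A B C : Set L} (hA : IsBlock ρ A) (hB : IsBlock ρ B) (hC : IsBlock ρ C) :
    ∀ x ∈ Set.image2 (· ⊓ ·) (Set.image2 (· ⊓ ·) A B) C,
      ∀ y ∈ Set.image2 (· ⊓ ·) (Set.image2 (· ⊓ ·) A B) C, ρ x y := by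
  rintro _ ⟨_, ⟨a, ha, b, hb, rfl⟩, c, hc, rfl⟩ _ ⟨_, ⟨a', ha', b', hb', rfl⟩, c', hc', rfl⟩
  exact hρ.2.2.2 _ _ _ _
    (hρ.2.2.2 _ _ _ _ (hA.1 a ha a' ha') (hB.1 b hb b' hb')) (hC.1 c hc c' hc')

lemma jS3_hlow {A B C : Set L} (hA : IsBlock ρ A) (hB : IsBlock ρ B) (hC : IsBlock ρ C) :
    ∀ x, (∀ s ∈ Set.image2 (· ⊔ ·) (Set.image2 (· ⊔ ·) A B) C, ρ x s) →
      ∃ u ∈ Set.image2 (· ⊔ ·) (Set.image2 (· ⊔ ·) A B) C, u ≤ x := by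
  intro x hx
  obtain ⟨a, ha⟩ := block_nonempty hρ hA x
  obtain ⟨b, hb⟩ := block_nonempty hρ hB x
  obtain ⟨c, hc⟩ := block_nonempty hρ hC x
  have hxa : x ⊓ a ∈ A := meet_mem_block hρ hA ha fun a' ha' =>
    ⟨a' ⊔ b ⊔ c, le_sup_left.trans le_sup_left,
      hx _ (Set.mem_image2_of_mem (Set.mem_image2_of_mem ha' hb) hc)⟩
  have hxb : x ⊓ b ∈ B := meet_mem_block hρ hB hb fun b' hb' =>
    ⟨a ⊔ b' ⊔ c, le_sup_right.trans le_sup_left,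
      hx _ (Set.mem_image2_of_mem (Set.mem_image2_of_mem ha hb') hc)⟩
  have hxc : x ⊓ c ∈ C := meet_mem_block hρ hC hc fun c' hc' =>
    ⟨a ⊔ b ⊔ c', le_sup_right,
      hx _ (Set.mem_image2_of_mem (Set.mem_image2_of_mem ha hb) hc')⟩
  exact ⟨_, Set.mem_image2_of_mem (Set.mem_image2_of_mem hxa hxb) hxc,
    sup_le (sup_le inf_le_left inf_le_left) inf_le_left⟩

lemma iS3_hhigh {A B C : Set L} (hA : IsBlock ρ A) (hB : IsBlock ρ B) (hC : IsBlock ρ C) :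
    ∀ x, (∀ s ∈ Set.image2 (· ⊓ ·) (Set.image2 (· ⊓ ·) A B) C, ρ x s) →
      ∃ u ∈ Set.image2 (· ⊓ ·) (Set.image2 (· ⊓ ·) A B) C, x ≤ u := by
  intro x hx
  obtain ⟨a, ha⟩ := block_nonempty hρ hA x
  obtain ⟨b, hb⟩ := block_nonempty hρ hB x
  obtain ⟨c, hc⟩ := block_nonempty hρ hC x
  have hxa : x ⊔ a ∈ A := join_mem_block hρ hA ha fun a' ha' =>
    ⟨a' ⊓ b ⊓ c, (inf_le_left.trans inf_le_left : a' ⊓ b ⊓ c ≤ a'),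
      hx _ (Set.mem_image2_of_mem (Set.mem_image2_of_mem ha' hb) hc)⟩
  have hxb : x ⊔ b ∈ B := join_mem_block hρ hB hb fun b' hb' =>
    ⟨a ⊓ b' ⊓ c, (inf_le_left.trans inf_le_right : a ⊓ b' ⊓ c ≤ b'),
      hx _ (Set.mem_image2_of_mem (Set.mem_image2_of_mem ha hb') hc)⟩
  have hxc : x ⊔ c ∈ C := join_mem_block hρ hC hc fun c' hc' =>
    ⟨a ⊓ b ⊓ c', inf_le_right,
      hx _ (Set.mem_image2_of_mem (Set.mem_image2_of_mem ha hb) hc')⟩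
  exact ⟨_, Set.mem_image2_of_mem (Set.mem_image2_of_mem hxa hxb) hxc,
    le_inf (le_inf le_sup_left le_sup_left) le_sup_left⟩

lemma supBlock_assoc (A B C : {A : Set L // IsBlock ρ A}) :
    supBlock hρ (supBlock hρ A B) C = supBlock hρ A (supBlock hρ B C) := by
  have pkg3 := sup_package hρ (jS3_clique hρ A.2 B.2 C.2) (jS3_hlow hρ A.2 B.2 C.2)
  have pkgAB := sup_package hρ (jS_clique hρ A.2 B.2) (jS_hlow hρ A.2 B.2)
  have pkgBC := sup_package hρ (jS_clique hρ B.2 C.2) (jS_hlow hρ B.2 C.2)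
  have pkgL := sup_package hρ (jS_clique hρ (supBlock hρ A B).2 C.2)
    (jS_hlow hρ (supBlock hρ A B).2 C.2)
  have pkgR := sup_package hρ (jS_clique hρ A.2 (supBlock hρ B C).2)
    (jS_hlow hρ A.2 (supBlock hρ B C).2)
  apply Subtype.ext
  have h1 : (supBlock hρ (supBlock hρ A B) C).1 =
      Polar ρ (Set.image2 (· ⊔ ·) (Set.image2 (· ⊔ ·) A.1 B.1) C.1) := by
    apply pkg3.2.2 _ (supBlock hρ (supBlock hρ A B) C).2
    rintro _ ⟨_, ⟨a, ha, b, hb, rfl⟩, c, hc, rfl⟩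
    exact pkgL.2.1 (Set.mem_image2_of_mem (pkgAB.2.1 (Set.mem_image2_of_mem ha hb)) hc)
  have h2 : (supBlock hρ A (supBlock hρ B C)).1 =
      Polar ρ (Set.image2 (· ⊔ ·) (Set.image2 (· ⊔ ·) A.1 B.1) C.1) := by
    apply pkg3.2.2 _ (supBlock hρ A (supBlock hρ B C)).2
    rintro _ ⟨_, ⟨a, ha, b, hb, rfl⟩, c, hc, rfl⟩
    show a ⊔ b ⊔ c ∈ _
    rw [sup_assoc]
    exact pkgR.2.1 (Set.mem_image2_of_mem ha (pkgBC.2.1 (Set.mem_image2_of_mem hb hc)))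
  rw [show (supBlock hρ (supBlock hρ A B) C).1 = _ from h1,
    show (supBlock hρ A (supBlock hρ B C)).1 = _ from h2]

lemma infBlock_assoc (A B C : {A : Set L // IsBlock ρ A}) :
    infBlock hρ (infBlock hρ A B) C = infBlock hρ A (infBlock hρ B C) := by
  have pkg3 := inf_package hρ (iS3_clique hρ A.2 B.2 C.2) (iS3_hhigh hρ A.2 B.2 C.2)
  have pkgAB := inf_package hρ (iS_clique hρ A.2 B.2) (iS_hhigh hρ A.2 B.2)
  have pkgBC := inf_package hρ (iS_clique hρ B.2 C.2) (iS_hhigh hρ B.2 C.2)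
  have pkgL := inf_package hρ (iS_clique hρ (infBlock hρ A B).2 C.2)
    (iS_hhigh hρ (infBlock hρ A B).2 C.2)
  have pkgR := inf_package hρ (iS_clique hρ A.2 (infBlock hρ B C).2)
    (iS_hhigh hρ A.2 (infBlock hρ B C).2)
  apply Subtype.ext
  have h1 : (infBlock hρ (infBlock hρ A B) C).1 =
      Polar ρ (Set.image2 (· ⊓ ·) (Set.image2 (· ⊓ ·) A.1 B.1) C.1) := by
    apply pkg3.2.2 _ (infBlock hρ (infBlock hρ A B) C).2
    rintro _ ⟨_, ⟨a, ha, b, hb, rfl⟩, c, hc, rfl⟩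
    exact pkgL.2.1 (Set.mem_image2_of_mem (pkgAB.2.1 (Set.mem_image2_of_mem ha hb)) hc)
  have h2 : (infBlock hρ A (infBlock hρ B C)).1 =
      Polar ρ (Set.image2 (· ⊓ ·) (Set.image2 (· ⊓ ·) A.1 B.1) C.1) := by
    apply pkg3.2.2 _ (infBlock hρ A (infBlock hρ B C)).2
    rintro _ ⟨_, ⟨a, ha, b, hb, rfl⟩, c, hc, rfl⟩
    show a ⊓ b ⊓ c ∈ _
    rw [inf_assoc]
    exact pkgR.2.1 (Set.mem_image2_of_mem ha (pkgBC.2.1 (Set.mem_image2_of_mem hb hc)))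
  rw [show (infBlock hρ (infBlock hρ A B) C).1 = _ from h1,
    show (infBlock hρ A (infBlock hρ B C)).1 = _ from h2]

lemma sup_inf_absorb (A B : {A : Set L // IsBlock ρ A}) :
    supBlock hρ A (infBlock hρ A B) = A := by
  set Q := infBlock hρ A B with hQ
  -- S := image2 ⊔ A.1 Q.1 is contained in A.1
  have hSsub : Set.image2 (· ⊔ ·) A.1 Q.1 ⊆ A.1 := by
    rintro _ ⟨a, ha, q, hq, rfl⟩
    obtain ⟨b, hb⟩ := block_nonempty hρ B.2 a
    show a ⊔ q ∈ A.1
    rw [sup_comm]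
    exact join_mem_block hρ A.2 ha fun a' ha' =>
      ⟨a' ⊓ b, inf_le_left, hq _ (Set.mem_image2_of_mem ha' hb)⟩
  have hcl : ∀ x ∈ Set.image2 (· ⊔ ·) A.1 Q.1, ∀ y ∈ Set.image2 (· ⊔ ·) A.1 Q.1, ρ x y :=
    fun x hx y hy => A.2.1 x (hSsub hx) y (hSsub hy)
  have hlow : ∀ x, (∀ s ∈ Set.image2 (· ⊔ ·) A.1 Q.1, ρ x s) →
      ∃ u ∈ Set.image2 (· ⊔ ·) A.1 Q.1, u ≤ x := by
    intro x hx
    obtain ⟨a, ha⟩ := block_nonempty hρ A.2 x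
    obtain ⟨q, hq⟩ := block_nonempty hρ Q.2 x
    have hxa : x ⊓ a ∈ A.1 := meet_mem_block hρ A.2 ha fun a' ha' =>
      ⟨a' ⊔ q, le_sup_left, hx _ (Set.mem_image2_of_mem ha' hq)⟩
    have hxq : x ⊓ q ∈ Q.1 := meet_mem_block hρ Q.2 hq fun q' hq' =>
      ⟨a ⊔ q', le_sup_right, hx _ (Set.mem_image2_of_mem ha hq')⟩
    exact ⟨_, Set.mem_image2_of_mem hxa hxq, sup_le inf_le_left inf_le_left⟩
  have pkg := sup_package hρ hcl hlow
  apply Subtype.ext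
  exact (pkg.2.2 A.1 A.2 hSsub).symm

lemma inf_sup_absorb (A B : {A : Set L // IsBlock ρ A}) :
    infBlock hρ A (supBlock hρ A B) = A := by
  set Q := supBlock hρ A B with hQ
  have hSsub : Set.image2 (· ⊓ ·) A.1 Q.1 ⊆ A.1 := by
    rintro _ ⟨a, ha, q, hq, rfl⟩
    obtain ⟨b, hb⟩ := block_nonempty hρ B.2 a
    show a ⊓ q ∈ A.1
    rw [inf_comm]
    exact meet_mem_block hρ A.2 ha fun a' ha' =>
      ⟨a' ⊔ b, le_sup_left, hq _ (Set.mem_image2_of_mem ha' hb)⟩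
  have hcl : ∀ x ∈ Set.image2 (· ⊓ ·) A.1 Q.1, ∀ y ∈ Set.image2 (· ⊓ ·) A.1 Q.1, ρ x y :=
    fun x hx y hy => A.2.1 x (hSsub hx) y (hSsub hy)
  have hhigh : ∀ x, (∀ s ∈ Set.image2 (· ⊓ ·) A.1 Q.1, ρ x s) →
      ∃ u ∈ Set.image2 (· ⊓ ·) A.1 Q.1, x ≤ u := by
    intro x hx
    obtain ⟨a, ha⟩ := block_nonempty hρ A.2 x
    obtain ⟨q, hq⟩ := block_nonempty hρ Q.2 x
    have hxa : x ⊔ a ∈ A.1 := join_mem_block hρ A.2 ha fun a' ha' =>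
      ⟨a' ⊓ q, inf_le_left, hx _ (Set.mem_image2_of_mem ha' hq)⟩
    have hxq : x ⊔ q ∈ Q.1 := join_mem_block hρ Q.2 hq fun q' hq' =>
      ⟨a ⊓ q', inf_le_right, hx _ (Set.mem_image2_of_mem ha hq')⟩
    exact ⟨_, Set.mem_image2_of_mem hxa hxq, le_inf le_sup_left le_sup_left⟩
  have pkg := inf_package hρ hcl hhigh
  apply Subtype.ext
  exact (pkg.2.2 A.1 A.2 hSsub).symm

end Ops

end CzedliAux

open CzedliAux in
theorem stmt3 [Lattice L] (ρ : L → L → Prop) (hρ : IsTolerance ρ) :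
    (∀ A B : Set L, IsBlock ρ A → IsBlock ρ B →
      (∃! C : Set L, IsBlock ρ C ∧ Set.image2 (· ⊔ ·) A B ⊆ C) ∧
      (∃! C : Set L, IsBlock ρ C ∧ Set.image2 (· ⊓ ·) A B ⊆ C)) ∧
    ∃ _inst : Lattice {A : Set L // IsBlock ρ A},
      ∀ A B : {A : Set L // IsBlock ρ A},
        Set.image2 (· ⊔ ·) A.1 B.1 ⊆ (A ⊔ B).1 ∧
        Set.image2 (· ⊓ ·) A.1 B.1 ⊆ (A ⊓ B).1 := by
  constructor
  · intro A B hA hB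
    constructor
    · have pkg := sup_package hρ (jS_clique hρ hA hB) (jS_hlow hρ hA hB)
      exact ⟨Polar ρ (Set.image2 (· ⊔ ·) A B), ⟨pkg.1, pkg.2.1⟩,
        fun C hC => pkg.2.2 C hC.1 hC.2⟩
    · have pkg := inf_package hρ (iS_clique hρ hA hB) (iS_hhigh hρ hA hB)
      exact ⟨Polar ρ (Set.image2 (· ⊓ ·) A B), ⟨pkg.1, pkg.2.1⟩,
        fun C hC => pkg.2.2 C hC.1 hC.2⟩
  · letI maxi : Max {A : Set L // IsBlock ρ A} := ⟨supBlock hρ⟩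
    letI mini : Min {A : Set L // IsBlock ρ A} := ⟨infBlock hρ⟩
    refine ⟨Lattice.mk' (supBlock_comm hρ) (supBlock_assoc hρ) (infBlock_comm hρ)
      (infBlock_assoc hρ) (sup_inf_absorb hρ) (inf_sup_absorb hρ), fun A B => ⟨?_, ?_⟩⟩
    · exact (sup_package hρ (jS_clique hρ A.2 B.2) (jS_hlow hρ A.2 B.2)).2.1
    · exact (inf_package hρ (iS_clique hρ A.2 B.2) (iS_hhigh hρ A.2 B.2)).2.1
end

section
/- Let ρ be a tolerance on a lattice L and assume the blocks of ρ form a lattice L/ρ where A ∨ B is the unique block containing {a ∨ b : a ∈ A, b ∈ B} and dually for meet. Then the set K = {(A, x) : A ∈ L/ρ, x ∈ A}, with operations (A,x) ∨ (B,y) = (A ∨ B, x ∨ y) and (A,x) ∧ (B,y) = (A ∧ B, x ∧ y), is a lattice. (In particular, the operations are well defined: x ∨ y ∈ A ∨ B and x ∧ y ∈ A ∧ B.) -/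
variable {L : Type*}

def Sublattice.setValuedGraph {α β : Type*} [Lattice α] [Lattice β] (S : α → Set β)
    (hsup : ∀ a b, Set.image2 (· ⊔ ·) (S a) (S b) ⊆ S (a ⊔ b))
    (hinf : ∀ a b, Set.image2 (· ⊓ ·) (S a) (S b) ⊆ S (a ⊓ b)) : Sublattice (α × β) where
  carrier := {p | p.2 ∈ S p.1}
  supClosed' p hp q hq := hsup p.1 q.1 (Set.mem_image2_of_mem hp hq)
  infClosed' p hp q hq := hinf p.1 q.1 (Set.mem_image2_of_mem hp hq)

theorem stmt4_general [Lattice L] (ρ : L → L → Prop)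
    (instB : Lattice {A : Set L // IsBlock ρ A})
    (hsup : ∀ A B : {A : Set L // IsBlock ρ A}, Set.image2 (· ⊔ ·) A.1 B.1 ⊆ (A ⊔ B).1)
    (hinf : ∀ A B : {A : Set L // IsBlock ρ A}, Set.image2 (· ⊓ ·) A.1 B.1 ⊆ (A ⊓ B).1) :
    (∀ (A B : {A : Set L // IsBlock ρ A}) (x y : L), x ∈ A.1 → y ∈ B.1 →
      x ⊔ y ∈ (A ⊔ B).1 ∧ x ⊓ y ∈ (A ⊓ B).1) ∧
    ∃ _instK : Lattice {p : {A : Set L // IsBlock ρ A} × L // p.2 ∈ p.1.1},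
      ∀ p q : {p : {A : Set L // IsBlock ρ A} × L // p.2 ∈ p.1.1},
        ((p ⊔ q).1.1 = p.1.1 ⊔ q.1.1 ∧ (p ⊔ q).1.2 = p.1.2 ⊔ q.1.2) ∧
        ((p ⊓ q).1.1 = p.1.1 ⊓ q.1.1 ∧ (p ⊓ q).1.2 = p.1.2 ⊓ q.1.2) := by
  refine ⟨fun A B x y hx hy =>
    ⟨hsup A B (Set.mem_image2_of_mem hx hy), hinf A B (Set.mem_image2_of_mem hx hy)⟩, ?_⟩
  -- Membership in the sublattice unfolds to `p.2 ∈ p.1.1`, so its lattice lives on `K` itself.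
  exact ⟨(Sublattice.setValuedGraph Subtype.val hsup hinf).instLatticeCoe,
    fun _ _ => ⟨⟨rfl, rfl⟩, ⟨rfl, rfl⟩⟩⟩

theorem stmt4 [Lattice L] (ρ : L → L → Prop) (hρ : IsTolerance ρ)
    (instB : Lattice {A : Set L // IsBlock ρ A})
    (hsup : ∀ A B : {A : Set L // IsBlock ρ A}, Set.image2 (· ⊔ ·) A.1 B.1 ⊆ (A ⊔ B).1)
    (hinf : ∀ A B : {A : Set L // IsBlock ρ A}, Set.image2 (· ⊓ ·) A.1 B.1 ⊆ (A ⊓ B).1) :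
    (∀ (A B : {A : Set L // IsBlock ρ A}) (x y : L), x ∈ A.1 → y ∈ B.1 →
      x ⊔ y ∈ (A ⊔ B).1 ∧ x ⊓ y ∈ (A ⊓ B).1) ∧
    ∃ _instK : Lattice {p : {A : Set L // IsBlock ρ A} × L // p.2 ∈ p.1.1},
      ∀ p q : {p : {A : Set L // IsBlock ρ A} × L // p.2 ∈ p.1.1},
        ((p ⊔ q).1.1 = p.1.1 ⊔ q.1.1 ∧ (p ⊔ q).1.2 = p.1.2 ⊔ q.1.2) ∧
        ((p ⊓ q).1.1 = p.1.1 ⊓ q.1.1 ∧ (p ⊓ q).1.2 = p.1.2 ⊓ q.1.2) :=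
  stmt4_general ρ instB hsup hinf
end

section
/- Let ρ be a tolerance relation on a lattice L. Every block of ρ is a convex sublattice of L. -/
variable {L : Type*}

lemma mem_of_rel_all [Lattice L] (ρ : L → L → Prop) (hρ : IsTolerance ρ)
    (A : Set L) (hA : IsBlock ρ A) (w : L) (h : ∀ a ∈ A, ρ w a) : w ∈ A := by
  obtain ⟨hrefl, hsym, -, -⟩ := hρ
  have := hA.2 (A ∪ {w}) (Set.subset_union_left) ?_
  · rw [← this]; right; rfl
  · rintro x (hx | hx) y (hy | hy)
    · exact hA.1 x hx y hy
    · rw [Set.mem_singleton_iff] at hy; subst hy; exact hsym _ _ (h x hx)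
    · rw [Set.mem_singleton_iff] at hx; subst hx; exact h y hy
    · rw [Set.mem_singleton_iff] at hx hy; subst hx; subst hy; exact hrefl _

theorem stmt11 [Lattice L] (ρ : L → L → Prop) (hρ : IsTolerance ρ)
    (A : Set L) (hA : IsBlock ρ A) :
    (∀ x ∈ A, ∀ y ∈ A, x ⊔ y ∈ A) ∧ (∀ x ∈ A, ∀ y ∈ A, x ⊓ y ∈ A) ∧
    (∀ x ∈ A, ∀ z ∈ A, ∀ y : L, x ≤ y → y ≤ z → y ∈ A) := by
  obtain ⟨hrefl, hsym, hsup, hinf⟩ := hρ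
  refine ⟨?_, ?_, ?_⟩
  · intro x hx y hy
    apply mem_of_rel_all ρ ⟨hrefl, hsym, hsup, hinf⟩ A hA
    intro a ha
    have := hsup x a y a (hA.1 x hx a ha) (hA.1 y hy a ha)
    simpa using this
  · intro x hx y hy
    apply mem_of_rel_all ρ ⟨hrefl, hsym, hsup, hinf⟩ A hA
    intro a ha
    have := hinf x a y a (hA.1 x hx a ha) (hA.1 y hy a ha)
    simpa using this
  · intro x hx z hz y hxy hyz
    apply mem_of_rel_all ρ ⟨hrefl, hsym, hsup, hinf⟩ A hA
    intro a ha
    have h1 : ρ y (a ⊓ y) := by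
      have := hinf z a y y (hA.1 z hz a ha) (hrefl y)
      simpa [inf_eq_right.mpr hyz] using this
    have h2 := hsup x a y (a ⊓ y) (hA.1 x hx a ha) h1
    simpa [sup_eq_right.mpr hxy, sup_inf_self] using h2
end

section
/- The transitive closure of a tolerance relation ρ on a lattice L is a congruence relation on L. -/
variable {L : Type*}

theorem stmt17 [Lattice L] (ρ : L → L → Prop) (hρ : IsTolerance ρ) :
    IsCongruence (Relation.TransGen ρ) := by
  obtain ⟨hrefl, hsymm, hsup, hinf⟩ := hρ
  have supL : ∀ a b c, Relation.TransGen ρ a b → Relation.TransGen ρ (a ⊔ c) (b ⊔ c) := by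
    intro a b c h
    induction h with
    | single h => exact Relation.TransGen.single (hsup _ _ _ _ h (hrefl c))
    | tail _ h ih => exact ih.tail (hsup _ _ _ _ h (hrefl c))
  have infL : ∀ a b c, Relation.TransGen ρ a b → Relation.TransGen ρ (a ⊓ c) (b ⊓ c) := by
    intro a b c h
    induction h with
    | single h => exact Relation.TransGen.single (hinf _ _ _ _ h (hrefl c))
    | tail _ h ih => exact ih.tail (hinf _ _ _ _ h (hrefl c))
  refine ⟨⟨fun x => Relation.TransGen.single (hrefl x), ?_, ?_, ?_⟩,
    fun x y z h1 h2 => h1.trans h2⟩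
  · intro x y h
    induction h with
    | single h => exact Relation.TransGen.single (hsymm _ _ h)
    | tail _ h ih => exact Relation.TransGen.head (hsymm _ _ h) ih
  · intro a b c d h1 h2
    exact (supL a b c h1).trans (by
      have := supL c d b h2
      simpa [sup_comm] using this)
  · intro a b c d h1 h2
    exact (infL a b c h1).trans (by
      have := infL c d b h2
      simpa [inf_comm] using this)
end
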